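/- Consider the closed-loop system of the power network with the distributed integral controller and an additional disturbance Q^l : [0,∞) → ℝⁿ with finite L² norm: η̇ = Dᵀω, Mω̇ = Q⁻¹θ − DΓ(V)sin(η) − Aω − P^l − Q^l(t), TV̇ = −E(η)V + Ē_fd, θ̇ = −L_comm·θ − Q⁻¹ω, where L_comm is the Laplacian of a connected communication graph, Q diagonal positive definite, P^l constant, and (η̄, 0, V̄, θ̄) the unperturbed equilibrium. Let Z(η, ω, V, θ) = ½ωᵀMω + W₂(η, V) + ½(θ − θ̄)ᵀ(θ − θ̄). Then for every ε with 0 < ε < 2·minᵢ Aᵢ, along any solution on [0,∞), Z(t) ≤ Z(0) + (1/(2ε))·∫₀^t ‖Q^l(s)‖² ds for all t ≥ 0; more precisely d/dt Z ≤ −ωᵀ(A − (ε/2)I)ω − (E(η)V − Ē_fd)ᵀT⁻¹(E(η)V − Ē_fd) − (θ − θ̄)ᵀL_comm(θ − θ̄) + (1/(2ε))‖Q^l(t)‖². -/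

import Mathlib

open Matrix Real Filter Topology Set

noncomputable section

/-- `Vec n` is `ℝⁿ`. -/
abbrev Vec (n : ℕ) := Fin n → ℝ

/-- Incidence matrix of the (undirected, arbitrarily oriented) graph whose `m` edges have
endpoints `ep1 k` (positive end) and `ep2 k` (negative end). -/
def incD {n m : ℕ} (ep1 ep2 : Fin m → Fin n) : Matrix (Fin n) (Fin m) ℝ :=
  Matrix.of fun i k => if i = ep1 k then 1 else if i = ep2 k then -1 else 0

/-- `Γ(V) = diag(γ₁,…,γ_m)`, `γ_k = V_i V_j B_{ij}` for edge `k = {i,j}`. -/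
def Gam {n m : ℕ} (ep1 ep2 : Fin m → Fin n) (B : Fin m → ℝ) (V : Vec n) :
    Matrix (Fin m) (Fin m) ℝ :=
  Matrix.diagonal fun k => V (ep1 k) * V (ep2 k) * B k

/-- The matrix `E(η)`. -/
def Emat {n m : ℕ} (ep1 ep2 : Fin m → Fin n) (B : Fin m → ℝ)
    (Bii Xd Xd' : Vec n) (η : Vec m) : Matrix (Fin n) (Fin n) ℝ :=
  Matrix.of fun i j =>
    if i = j then (1 - Bii i * (Xd i - Xd' i)) / (Xd i - Xd' i)
    else -∑ k, (if (ep1 k = i ∧ ep2 k = j) ∨ (ep1 k = j ∧ ep2 k = i)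
      then B k * Real.cos (η k) else 0)

/-- The diagonal matrix `F`. -/
def Fmat {n : ℕ} (Bii Xd Xd' : Vec n) : Matrix (Fin n) (Fin n) ℝ :=
  Matrix.diagonal fun i => (1 - Bii i * (Xd i - Xd' i)) / (Xd i - Xd' i)

/-- componentwise sine -/
def sinv {m : ℕ} (η : Vec m) : Vec m := fun k => Real.sin (η k)
/-- componentwise cosine -/
def cosv {m : ℕ} (η : Vec m) : Vec m := fun k => Real.cos (η k)

/-- The storage function `W₂` with reference point `(ηb, Vb)`. -/
def W2 {n m : ℕ} (ep1 ep2 : Fin m → Fin n) (B : Fin m → ℝ) (Bii Xd Xd' : Vec n)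
    (Efd : Vec n) (ηb : Vec m) (Vb : Vec n) (η : Vec m) (V : Vec n) : ℝ :=
  -((1 : Vec m) ⬝ᵥ (Gam ep1 ep2 B V).mulVec (cosv η))
    + (1 : Vec m) ⬝ᵥ (Gam ep1 ep2 B Vb).mulVec (cosv ηb)
    - ((Gam ep1 ep2 B Vb).mulVec (sinv ηb)) ⬝ᵥ (η - ηb)
    - Efd ⬝ᵥ (V - Vb)
    + (1 / 2) * (V ⬝ᵥ (Fmat Bii Xd Xd').mulVec V)
    - (1 / 2) * (Vb ⬝ᵥ (Fmat Bii Xd Xd').mulVec Vb)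

/-- entrywise absolute value `|D|` of the incidence matrix. -/
def absD {n m : ℕ} (ep1 ep2 : Fin m → Fin n) : Matrix (Fin n) (Fin m) ℝ :=
  Matrix.of fun i k => |incD ep1 ep2 i k|

/-- The matrix `E(η̄) − diag(V̄)⁻¹|D|Γ(V̄)diag(sin η̄)diag(cos η̄)⁻¹diag(sin η̄)|D|ᵀdiag(V̄)⁻¹`
appearing in Assumption 3. -/
def Schur {n m : ℕ} (ep1 ep2 : Fin m → Fin n) (B : Fin m → ℝ) (Bii Xd Xd' : Vec n)
    (ηb : Vec m) (Vb : Vec n) : Matrix (Fin n) (Fin n) ℝ :=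
  Emat ep1 ep2 B Bii Xd Xd' ηb -
    (Matrix.diagonal fun i => (Vb i)⁻¹) * absD ep1 ep2 * Gam ep1 ep2 B Vb *
      Matrix.diagonal (sinv ηb) * (Matrix.diagonal (cosv ηb))⁻¹ *
      Matrix.diagonal (sinv ηb) * (absD ep1 ep2)ᵀ * (Matrix.diagonal fun i => (Vb i)⁻¹)

/-!
`W₂` has gradient `(Γ(V) sin η − Γ(V̄) sin η̄, E(η)V − Ē_fd)`, so along a solution of the closed
loop the power-flow terms and the cross terms between `ω` and `θ − θ̄` cancel (the latter because
`L_comm 1 = 0` and the regulator equations fix `Pˡ`), leaving `Ż = −ωᵀAω − ‖E(η)V − Ē_fd‖²_{T⁻¹}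
− (θ − θ̄)ᵀL_comm(θ − θ̄) − ωᵀQˡ`. Young's inequality `−ωᵢQˡᵢ ≤ (ε/2)ωᵢ² + (Qˡᵢ)²/(2ε)` absorbs the
disturbance into the damping, and integrating the resulting bound `Ż ≤ ‖Qˡ‖²/(2ε)` gives the
estimate on `Z(t)`.
-/

section Calculus

variable {ι : Type*} [Fintype ι] {x y : ℝ → ι → ℝ} {x' y' : ι → ℝ} {t : ℝ}

theorem HasDerivAt.dotProduct (hx : HasDerivAt x x' t) (hy : HasDerivAt y y' t) :
    HasDerivAt (fun s => x s ⬝ᵥ y s) (x' ⬝ᵥ y t + x t ⬝ᵥ y') t := by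
  have := HasDerivAt.fun_sum (u := Finset.univ) fun i _ =>
    (hasDerivAt_pi.1 hx i).mul (hasDerivAt_pi.1 hy i)
  rwa [Finset.sum_add_distrib] at this

theorem HasDerivAt.mulVec (S : Matrix ι ι ℝ) (hx : HasDerivAt x x' t) :
    HasDerivAt (fun s => S *ᵥ x s) (S *ᵥ x') t :=
  hasDerivAt_pi.2 fun i =>
    (hasDerivAt_const t (S i)).dotProduct hx |>.congr_deriv (by simp; rfl)

theorem Matrix.IsSymm.dotProduct_mulVec_comm {S : Matrix ι ι ℝ} (hS : S.IsSymm) (v w : ι → ℝ) :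
    v ⬝ᵥ S *ᵥ w = w ⬝ᵥ S *ᵥ v := by
  rw [dotProduct_mulVec, dotProduct_comm, ← mulVec_transpose, hS.eq]

theorem HasDerivAt.half_dotProduct_mulVec_self {S : Matrix ι ι ℝ} (hS : S.IsSymm)
    (hx : HasDerivAt x x' t) :
    HasDerivAt (fun s => 1 / 2 * (x s ⬝ᵥ S *ᵥ x s)) (x t ⬝ᵥ S *ᵥ x') t := by
  refine ((hx.dotProduct (hx.mulVec S)).const_mul (1 / 2 : ℝ)).congr_deriv ?_
  rw [hS.dotProduct_mulVec_comm x']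
  ring

theorem HasDerivAt.half_dotProduct_self (hx : HasDerivAt x x' t) :
    HasDerivAt (fun s => 1 / 2 * (x s ⬝ᵥ x s)) (x t ⬝ᵥ x') t := by
  refine ((hx.dotProduct hx).const_mul (1 / 2 : ℝ)).congr_deriv ?_
  rw [dotProduct_comm x']
  ring

theorem le_add_integral_of_hasDerivAt_le {f f' g : ℝ → ℝ} {a b : ℝ} (hab : a ≤ b)
    (hf : ∀ s, HasDerivAt f (f' s) s) (hg : MeasureTheory.IntegrableOn g (Icc a b))
    (hle : ∀ s, f' s ≤ g s) :
    f b ≤ f a + ∫ s in Ioc a b, g s := by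
  have := intervalIntegral.sub_le_integral_of_hasDeriv_right_of_le hab
    (fun s _ => (hf s).continuousAt.continuousWithinAt) (fun s _ => (hf s).hasDerivWithinAt)
    hg fun s _ => hle s
  rw [intervalIntegral.integral_of_le hab] at this
  linarith

end Calculus

theorem Matrix.dotProduct_diagonal_mulVec_self_nonneg {ι : Type*} [Fintype ι] [DecidableEq ι]
    {d : ι → ℝ} (hd : 0 ≤ d) (x : ι → ℝ) : 0 ≤ x ⬝ᵥ diagonal d *ᵥ x :=
  (PosSemidef.diagonal hd).dotProduct_mulVec_nonneg x

theorem SimpleGraph.lapMatrix_mulVec_const {V : Type*} [Fintype V] [DecidableEq V]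
    (G : SimpleGraph V) [DecidableRel G.Adj] (c : ℝ) : G.lapMatrix ℝ *ᵥ (fun _ => c) = 0 := by
  ext i
  simp [lapMatrix_mulVec_apply]

section Network

variable {n m : ℕ} (ep1 ep2 : Fin m → Fin n) (B : Fin m → ℝ) (Bii Xd Xd' : Vec n)

theorem Emat_eq_Fmat_sub (hep : ∀ k, ep1 k ≠ ep2 k) (η : Vec m) :
    Emat ep1 ep2 B Bii Xd Xd' η = Fmat Bii Xd Xd'
      - ∑ k, (single (ep1 k) (ep2 k) (B k * Real.cos (η k))
        + single (ep2 k) (ep1 k) (B k * Real.cos (η k))) := by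
  ext i j
  simp only [Emat, Fmat, of_apply, Matrix.sub_apply, diagonal_apply, Matrix.sum_apply,
    Matrix.add_apply, single_apply]
  split_ifs with hij
  · subst hij
    rw [Finset.sum_eq_zero fun k _ => by grind, sub_zero]
  · rw [zero_sub, neg_inj]
    exact Finset.sum_congr rfl fun k _ => by grind

theorem dotProduct_Emat_mulVec (hep : ∀ k, ep1 k ≠ ep2 k) (η : Vec m) (x y : Vec n) :
    x ⬝ᵥ Emat ep1 ep2 B Bii Xd Xd' η *ᵥ y = x ⬝ᵥ Fmat Bii Xd Xd' *ᵥ y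
      - ∑ k, B k * Real.cos (η k) * (x (ep1 k) * y (ep2 k) + x (ep2 k) * y (ep1 k)) := by
  rw [Emat_eq_Fmat_sub _ _ _ _ _ _ hep, sub_mulVec, dotProduct_sub, sum_mulVec, dotProduct_sum]
  congr 1
  refine Finset.sum_congr rfl fun k _ => ?_
  simp only [add_mulVec, single_mulVec_eq, dotProduct_add, dotProduct_smul, dotProduct_single,
    smul_eq_mul]
  ring

theorem Gam_mulVec_apply (V : Vec n) (v : Vec m) (k : Fin m) :
    (Gam ep1 ep2 B V *ᵥ v) k = V (ep1 k) * V (ep2 k) * B k * v k :=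
  mulVec_diagonal _ _ _

theorem hasDerivAt_one_dotProduct_Gam_mulVec_cosv {η : ℝ → Vec m} {V : ℝ → Vec n}
    {η' : Vec m} {V' : Vec n} {t : ℝ} (hη : HasDerivAt η η' t) (hV : HasDerivAt V V' t) :
    HasDerivAt (fun s => (1 : Vec m) ⬝ᵥ Gam ep1 ep2 B (V s) *ᵥ cosv (η s))
      (∑ k, B k * Real.cos (η t k) * (V' (ep1 k) * V t (ep2 k) + V' (ep2 k) * V t (ep1 k))
        - Gam ep1 ep2 B (V t) *ᵥ sinv (η t) ⬝ᵥ η') t := by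
  have hVi := fun i => hasDerivAt_pi.1 hV i
  have hsum := HasDerivAt.fun_sum (u := Finset.univ) fun k _ =>
    (((hVi (ep1 k)).mul (hVi (ep2 k))).mul_const (B k)).mul (hasDerivAt_pi.1 hη k).cos
  simp only [one_dotProduct, Gam_mulVec_apply, cosv]
  refine hsum.congr_deriv ?_
  simp only [dotProduct, Gam_mulVec_apply, sinv, Pi.mul_apply, ← Finset.sum_sub_distrib]
  exact Finset.sum_congr rfl fun k _ => by ring

theorem hasDerivAt_W2 (hep : ∀ k, ep1 k ≠ ep2 k) (Efd : Vec n) (ηb : Vec m) (Vb : Vec n)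
    {η : ℝ → Vec m} {V : ℝ → Vec n} {η' : Vec m} {V' : Vec n} {t : ℝ}
    (hη : HasDerivAt η η' t) (hV : HasDerivAt V V' t) :
    HasDerivAt (fun s => W2 ep1 ep2 B Bii Xd Xd' Efd ηb Vb (η s) (V s))
      ((Gam ep1 ep2 B (V t) *ᵥ sinv (η t) - Gam ep1 ep2 B Vb *ᵥ sinv ηb) ⬝ᵥ η'
        + (Emat ep1 ep2 B Bii Xd Xd' (η t) *ᵥ V t - Efd) ⬝ᵥ V') t := by
  have hF : (Fmat Bii Xd Xd').IsSymm := isSymm_diagonal _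
  have h := (((((hasDerivAt_one_dotProduct_Gam_mulVec_cosv ep1 ep2 B hη hV).neg.add_const
    ((1 : Vec m) ⬝ᵥ Gam ep1 ep2 B Vb *ᵥ cosv ηb)).sub
    ((hasDerivAt_const t (Gam ep1 ep2 B Vb *ᵥ sinv ηb)).dotProduct (hη.sub_const ηb))).sub
    ((hasDerivAt_const t Efd).dotProduct (hV.sub_const Vb))).add
    (hV.half_dotProduct_mulVec_self hF)).sub_const (1 / 2 * (Vb ⬝ᵥ Fmat Bii Xd Xd' *ᵥ Vb))
  refine h.congr_deriv ?_
  rw [sub_dotProduct, sub_dotProduct, dotProduct_comm (Emat _ _ _ _ _ _ _ *ᵥ V t),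
    dotProduct_Emat_mulVec _ _ _ _ _ _ hep,
    hF.dotProduct_mulVec_comm (V t)]
  simp only [zero_dotProduct, zero_add]
  ring

end Network

section Dissipation

variable {n m : ℕ}

theorem energy_balance (D : Matrix (Fin n) (Fin m) ℝ) (L : Matrix (Fin n) (Fin n) ℝ)
    {M A T qinv ω ω' θ θb Pl Ql y Efd V' : Vec n} {p pb : Vec m} (hT : ∀ i, T i ≠ 0)
    (hL : L *ᵥ θb = 0)
    (hPl : (0 : Vec n) = diagonal qinv *ᵥ θb - D *ᵥ pb - Pl)
    (hω' : diagonal M *ᵥ ω' = diagonal qinv *ᵥ θ - D *ᵥ p - diagonal A *ᵥ ω - Pl - Ql)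
    (hV' : diagonal T *ᵥ V' = -y + Efd) :
    ω ⬝ᵥ diagonal M *ᵥ ω' + ((p - pb) ⬝ᵥ Dᵀ *ᵥ ω + (y - Efd) ⬝ᵥ V')
        + (θ - θb) ⬝ᵥ (-(L *ᵥ θ) - diagonal qinv *ᵥ ω)
      = -(ω ⬝ᵥ diagonal A *ᵥ ω) - (y - Efd) ⬝ᵥ (diagonal fun i => (T i)⁻¹) *ᵥ (y - Efd)
        - (θ - θb) ⬝ᵥ L *ᵥ (θ - θb) - ω ⬝ᵥ Ql := by
  have hPl' : Pl = diagonal qinv *ᵥ θb - D *ᵥ pb := (sub_eq_zero.1 hPl.symm).symm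
  have hV'' : V' = -((diagonal fun i => (T i)⁻¹) *ᵥ (y - Efd)) := by
    rw [← mulVec_neg, neg_sub, sub_eq_neg_add, ← hV', mulVec_mulVec, diagonal_mul_diagonal]
    simp [inv_mul_cancel₀ (hT _)]
  have hLθ : L *ᵥ θ = L *ᵥ (θ - θb) := by rw [mulVec_sub, hL, sub_zero]
  have hD : ∀ v, ω ⬝ᵥ D *ᵥ v = v ⬝ᵥ Dᵀ *ᵥ ω := fun v => by
    rw [dotProduct_mulVec, ← mulVec_transpose, dotProduct_comm]
  have hQ := (isSymm_diagonal qinv).dotProduct_mulVec_comm ω (θ - θb)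
  rw [hω', hPl', hV'', hLθ]
  simp only [dotProduct_sub, dotProduct_neg, mulVec_sub, sub_dotProduct] at hQ ⊢
  linear_combination hD pb - hD p + hQ

theorem neg_dotProduct_diagonal_mulVec_sub_dotProduct_le {ι : Type*} [Fintype ι] [DecidableEq ι]
    (A x y : ι → ℝ) {ε : ℝ} (hε : 0 < ε) :
    -(x ⬝ᵥ diagonal A *ᵥ x) - x ⬝ᵥ y
      ≤ -(x ⬝ᵥ (diagonal fun i => A i - ε / 2) *ᵥ x) + 1 / (2 * ε) * ∑ i, y i ^ 2 := by
  simp only [dotProduct, mulVec_diagonal, Finset.mul_sum, ← Finset.sum_neg_distrib,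
    ← Finset.sum_sub_distrib, ← Finset.sum_add_distrib]
  gcongr with i
  have key : 0 ≤ (ε * x i + y i) ^ 2 / (2 * ε) := by positivity
  have gap : (ε * x i + y i) ^ 2 / (2 * ε)
      = ε / 2 * x i ^ 2 + x i * y i + 1 / (2 * ε) * y i ^ 2 := by
    field_simp
    ring
  linarith

theorem dissipation_rate_le {A T : Vec n} {L : Matrix (Fin n) (Fin n) ℝ} {ε : ℝ} (hε0 : 0 < ε)
    (hε : ∀ i, ε < 2 * A i) (hT : ∀ i, 0 < T i) (hL : L.PosSemidef) (x e z y : Vec n) :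
    let rate := -(x ⬝ᵥ diagonal A *ᵥ x) - e ⬝ᵥ (diagonal fun i => (T i)⁻¹) *ᵥ e
      - z ⬝ᵥ L *ᵥ z - x ⬝ᵥ y
    let bound := -(x ⬝ᵥ (diagonal fun i => A i - ε / 2) *ᵥ x)
      - e ⬝ᵥ (diagonal fun i => (T i)⁻¹) *ᵥ e - z ⬝ᵥ L *ᵥ z + 1 / (2 * ε) * ∑ i, y i ^ 2
    rate ≤ bound ∧ bound ≤ 1 / (2 * ε) * ∑ i, y i ^ 2 := by
  intro rate bound
  have hyoung := neg_dotProduct_diagonal_mulVec_sub_dotProduct_le A x y hε0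
  have hx := dotProduct_diagonal_mulVec_self_nonneg (d := fun i => A i - ε / 2)
    (fun i => show 0 ≤ A i - ε / 2 by linarith [hε i]) x
  have he := dotProduct_diagonal_mulVec_self_nonneg (d := fun i => (T i)⁻¹)
    (fun i => (inv_pos.2 (hT i)).le) e
  have hz : 0 ≤ z ⬝ᵥ L *ᵥ z := by simpa using hL.dotProduct_mulVec_nonneg z
  constructor <;> linarith

end Dissipation

open MeasureTheory in
theorem closed_loop_L2_robustness_general
    {n m : ℕ} (ep1 ep2 : Fin m → Fin n) (hep : ∀ k, ep1 k ≠ ep2 k)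
    (B : Fin m → ℝ)
    (Bii Xd Xd' : Vec n)
    (Md Ad Td : Vec n) (hT : ∀ i, 0 < Td i)
    (q : Vec n)
    (G : SimpleGraph (Fin n)) [DecidableRel G.Adj]
    (Efd Pl : Vec n)
    (ηb : Vec m) (Vb : Vec n)
    (heq2 : (0 : Vec n) = (fun i => (q i)⁻¹ * ((∑ j, Pl j) / (∑ j, (q j)⁻¹)))
      - (incD ep1 ep2).mulVec ((Gam ep1 ep2 B Vb).mulVec (sinv ηb)) - Pl)
    -- the disturbance, with finite L² norm on `[0, ∞)`
    (Ql : ℝ → Vec n)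
    (hL2 : IntegrableOn (fun s => ∑ i, (Ql s i) ^ 2) (Set.Ici (0:ℝ)))
    (η : ℝ → Vec m) (ω ω' V V' θ : ℝ → Vec n)
    (hη : ∀ t, HasDerivAt η ((incD ep1 ep2)ᵀ.mulVec (ω t)) t)
    (hω : ∀ t, HasDerivAt ω (ω' t) t)
    (hωdyn : ∀ t, (Matrix.diagonal Md).mulVec (ω' t)
      = (Matrix.diagonal fun i => (q i)⁻¹).mulVec (θ t)
        - (incD ep1 ep2).mulVec ((Gam ep1 ep2 B (V t)).mulVec (sinv (η t)))
        - (Matrix.diagonal Ad).mulVec (ω t) - Pl - Ql t)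
    (hV : ∀ t, HasDerivAt V (V' t) t)
    (hVdyn : ∀ t, (Matrix.diagonal Td).mulVec (V' t)
      = -(Emat ep1 ep2 B Bii Xd Xd' (η t)).mulVec (V t) + Efd)
    (hθ : ∀ t, HasDerivAt θ
      (-(G.lapMatrix ℝ).mulVec (θ t)
        - (Matrix.diagonal fun i => (q i)⁻¹).mulVec (ω t)) t)
    (ε : ℝ) (hε0 : 0 < ε) (hε : ∀ i, ε < 2 * Ad i) :
    (∀ t, HasDerivAt
        (fun s => (1 / 2) * (ω s ⬝ᵥ (Matrix.diagonal Md).mulVec (ω s))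
          + W2 ep1 ep2 B Bii Xd Xd' Efd ηb Vb (η s) (V s)
          + (1 / 2) * ((θ s - fun _ => (∑ j, Pl j) / (∑ j, (q j)⁻¹))
              ⬝ᵥ (θ s - fun _ => (∑ j, Pl j) / (∑ j, (q j)⁻¹))))
        (-(ω t ⬝ᵥ (Matrix.diagonal Ad).mulVec (ω t))
          - (((Emat ep1 ep2 B Bii Xd Xd' (η t)).mulVec (V t) - Efd) ⬝ᵥ
              (Matrix.diagonal fun i => (Td i)⁻¹).mulVec
                ((Emat ep1 ep2 B Bii Xd Xd' (η t)).mulVec (V t) - Efd))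
          - ((θ t - fun _ => (∑ j, Pl j) / (∑ j, (q j)⁻¹))
              ⬝ᵥ (G.lapMatrix ℝ).mulVec
                (θ t - fun _ => (∑ j, Pl j) / (∑ j, (q j)⁻¹)))
          - ω t ⬝ᵥ Ql t) t ∧
      (-(ω t ⬝ᵥ (Matrix.diagonal Ad).mulVec (ω t))
          - (((Emat ep1 ep2 B Bii Xd Xd' (η t)).mulVec (V t) - Efd) ⬝ᵥ
              (Matrix.diagonal fun i => (Td i)⁻¹).mulVec
                ((Emat ep1 ep2 B Bii Xd Xd' (η t)).mulVec (V t) - Efd))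
          - ((θ t - fun _ => (∑ j, Pl j) / (∑ j, (q j)⁻¹))
              ⬝ᵥ (G.lapMatrix ℝ).mulVec
                (θ t - fun _ => (∑ j, Pl j) / (∑ j, (q j)⁻¹)))
          - ω t ⬝ᵥ Ql t)
        ≤ -(ω t ⬝ᵥ (Matrix.diagonal fun i => Ad i - ε / 2).mulVec (ω t))
          - (((Emat ep1 ep2 B Bii Xd Xd' (η t)).mulVec (V t) - Efd) ⬝ᵥ
              (Matrix.diagonal fun i => (Td i)⁻¹).mulVec
                ((Emat ep1 ep2 B Bii Xd Xd' (η t)).mulVec (V t) - Efd))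
          - ((θ t - fun _ => (∑ j, Pl j) / (∑ j, (q j)⁻¹))
              ⬝ᵥ (G.lapMatrix ℝ).mulVec
                (θ t - fun _ => (∑ j, Pl j) / (∑ j, (q j)⁻¹)))
          + (1 / (2 * ε)) * ∑ i, (Ql t i) ^ 2) ∧
    (∀ t ≥ (0:ℝ),
      ((1 / 2) * (ω t ⬝ᵥ (Matrix.diagonal Md).mulVec (ω t))
        + W2 ep1 ep2 B Bii Xd Xd' Efd ηb Vb (η t) (V t)
        + (1 / 2) * ((θ t - fun _ => (∑ j, Pl j) / (∑ j, (q j)⁻¹))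
            ⬝ᵥ (θ t - fun _ => (∑ j, Pl j) / (∑ j, (q j)⁻¹))))
      ≤ ((1 / 2) * (ω 0 ⬝ᵥ (Matrix.diagonal Md).mulVec (ω 0))
        + W2 ep1 ep2 B Bii Xd Xd' Efd ηb Vb (η 0) (V 0)
        + (1 / 2) * ((θ 0 - fun _ => (∑ j, Pl j) / (∑ j, (q j)⁻¹))
            ⬝ᵥ (θ 0 - fun _ => (∑ j, Pl j) / (∑ j, (q j)⁻¹))))
        + (1 / (2 * ε)) * ∫ s in Set.Ioc (0:ℝ) t, ∑ i, (Ql s i) ^ 2) := by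
  set θb : Vec n := fun _ => (∑ j, Pl j) / (∑ j, (q j)⁻¹)
  have hPl : (0 : Vec n) = (diagonal fun i => (q i)⁻¹) *ᵥ θb
      - incD ep1 ep2 *ᵥ (Gam ep1 ep2 B Vb *ᵥ sinv ηb) - Pl := by
    convert heq2 using 3
    ext i
    simp [θb, mulVec_diagonal]
  have hZ := fun t =>
    ((((hω t).half_dotProduct_mulVec_self (isSymm_diagonal Md)).add
      (hasDerivAt_W2 ep1 ep2 B Bii Xd Xd' hep Efd ηb Vb (hη t) (hV t))).add
      ((hθ t).sub_const θb).half_dotProduct_self).congr_deriv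
      (energy_balance _ _ (fun i => (hT i).ne') (G.lapMatrix_mulVec_const _) hPl (hωdyn t)
        (hVdyn t))
  have hrate := fun t => dissipation_rate_le hε0 hε hT (G.posSemidef_lapMatrix ℝ) (ω t)
    (Emat ep1 ep2 B Bii Xd Xd' (η t) *ᵥ V t - Efd) (θ t - θb) (Ql t)
  refine ⟨fun t => ⟨hZ t, (hrate t).1⟩, fun t ht => ?_⟩
  have hint := (hL2.mono_set (Icc_subset_Ici_self : Icc 0 t ⊆ Ici 0)).const_mul (1 / (2 * ε))
  have := le_add_integral_of_hasDerivAt_le ht hZ hint fun s => (hrate s).1.trans (hrate s).2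
  rwa [MeasureTheory.integral_const_mul] at this

open MeasureTheory in
/-- Remark 9: robustness of the closed loop to an additional `L²`
disturbance `Qˡ`: for every `0 < ε < 2 minᵢ Aᵢ`, along any solution,
`Ż ≤ −ωᵀ(A − (ε/2)I)ω − ‖E(η)V − Ē_fd‖²_{T⁻¹} − (θ − θ̄)ᵀL_comm(θ − θ̄) + (1/(2ε))‖Qˡ‖²`
and hence `Z(t) ≤ Z(0) + (1/(2ε))∫₀ᵗ‖Qˡ(s)‖² ds`. -/
theorem closed_loop_L2_robustness
    {n m : ℕ} (ep1 ep2 : Fin m → Fin n) (hep : ∀ k, ep1 k ≠ ep2 k)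
    (B : Fin m → ℝ) (hB : ∀ k, 0 < B k)
    (Bii Xd Xd' : Vec n)
    (Md Ad Td : Vec n) (hM : ∀ i, 0 < Md i) (hA : ∀ i, 0 < Ad i) (hT : ∀ i, 0 < Td i)
    (q : Vec n) (hq : ∀ i, 0 < q i)
    (G : SimpleGraph (Fin n)) [DecidableRel G.Adj] (hG : G.Connected)
    (Efd Pl : Vec n)
    (ηb : Vec m) (Vb : Vec n)
    (heq2 : (0 : Vec n) = (fun i => (q i)⁻¹ * ((∑ j, Pl j) / (∑ j, (q j)⁻¹)))
      - (incD ep1 ep2).mulVec ((Gam ep1 ep2 B Vb).mulVec (sinv ηb)) - Pl)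
    (heq3 : (Emat ep1 ep2 B Bii Xd Xd' ηb).mulVec Vb = Efd)
    -- the disturbance, with finite L² norm on `[0, ∞)`
    (Ql : ℝ → Vec n)
    (hL2 : IntegrableOn (fun s => ∑ i, (Ql s i) ^ 2) (Set.Ici (0:ℝ)))
    (η : ℝ → Vec m) (ω ω' V V' θ : ℝ → Vec n)
    (hη : ∀ t, HasDerivAt η ((incD ep1 ep2)ᵀ.mulVec (ω t)) t)
    (hω : ∀ t, HasDerivAt ω (ω' t) t)
    (hωdyn : ∀ t, (Matrix.diagonal Md).mulVec (ω' t)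
      = (Matrix.diagonal fun i => (q i)⁻¹).mulVec (θ t)
        - (incD ep1 ep2).mulVec ((Gam ep1 ep2 B (V t)).mulVec (sinv (η t)))
        - (Matrix.diagonal Ad).mulVec (ω t) - Pl - Ql t)
    (hV : ∀ t, HasDerivAt V (V' t) t)
    (hVdyn : ∀ t, (Matrix.diagonal Td).mulVec (V' t)
      = -(Emat ep1 ep2 B Bii Xd Xd' (η t)).mulVec (V t) + Efd)
    (hθ : ∀ t, HasDerivAt θ
      (-(G.lapMatrix ℝ).mulVec (θ t)
        - (Matrix.diagonal fun i => (q i)⁻¹).mulVec (ω t)) t)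
    (ε : ℝ) (hε0 : 0 < ε) (hε : ∀ i, ε < 2 * Ad i) :
    (∀ t, HasDerivAt
        (fun s => (1 / 2) * (ω s ⬝ᵥ (Matrix.diagonal Md).mulVec (ω s))
          + W2 ep1 ep2 B Bii Xd Xd' Efd ηb Vb (η s) (V s)
          + (1 / 2) * ((θ s - fun _ => (∑ j, Pl j) / (∑ j, (q j)⁻¹))
              ⬝ᵥ (θ s - fun _ => (∑ j, Pl j) / (∑ j, (q j)⁻¹))))
        (-(ω t ⬝ᵥ (Matrix.diagonal Ad).mulVec (ω t))
          - (((Emat ep1 ep2 B Bii Xd Xd' (η t)).mulVec (V t) - Efd) ⬝ᵥ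
              (Matrix.diagonal fun i => (Td i)⁻¹).mulVec
                ((Emat ep1 ep2 B Bii Xd Xd' (η t)).mulVec (V t) - Efd))
          - ((θ t - fun _ => (∑ j, Pl j) / (∑ j, (q j)⁻¹))
              ⬝ᵥ (G.lapMatrix ℝ).mulVec
                (θ t - fun _ => (∑ j, Pl j) / (∑ j, (q j)⁻¹)))
          - ω t ⬝ᵥ Ql t) t ∧
      (-(ω t ⬝ᵥ (Matrix.diagonal Ad).mulVec (ω t))
          - (((Emat ep1 ep2 B Bii Xd Xd' (η t)).mulVec (V t) - Efd) ⬝ᵥ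
              (Matrix.diagonal fun i => (Td i)⁻¹).mulVec
                ((Emat ep1 ep2 B Bii Xd Xd' (η t)).mulVec (V t) - Efd))
          - ((θ t - fun _ => (∑ j, Pl j) / (∑ j, (q j)⁻¹))
              ⬝ᵥ (G.lapMatrix ℝ).mulVec
                (θ t - fun _ => (∑ j, Pl j) / (∑ j, (q j)⁻¹)))
          - ω t ⬝ᵥ Ql t)
        ≤ -(ω t ⬝ᵥ (Matrix.diagonal fun i => Ad i - ε / 2).mulVec (ω t))
          - (((Emat ep1 ep2 B Bii Xd Xd' (η t)).mulVec (V t) - Efd) ⬝ᵥ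
              (Matrix.diagonal fun i => (Td i)⁻¹).mulVec
                ((Emat ep1 ep2 B Bii Xd Xd' (η t)).mulVec (V t) - Efd))
          - ((θ t - fun _ => (∑ j, Pl j) / (∑ j, (q j)⁻¹))
              ⬝ᵥ (G.lapMatrix ℝ).mulVec
                (θ t - fun _ => (∑ j, Pl j) / (∑ j, (q j)⁻¹)))
          + (1 / (2 * ε)) * ∑ i, (Ql t i) ^ 2) ∧
    (∀ t ≥ (0:ℝ),
      ((1 / 2) * (ω t ⬝ᵥ (Matrix.diagonal Md).mulVec (ω t))
        + W2 ep1 ep2 B Bii Xd Xd' Efd ηb Vb (η t) (V t)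
        + (1 / 2) * ((θ t - fun _ => (∑ j, Pl j) / (∑ j, (q j)⁻¹))
            ⬝ᵥ (θ t - fun _ => (∑ j, Pl j) / (∑ j, (q j)⁻¹))))
      ≤ ((1 / 2) * (ω 0 ⬝ᵥ (Matrix.diagonal Md).mulVec (ω 0))
        + W2 ep1 ep2 B Bii Xd Xd' Efd ηb Vb (η 0) (V 0)
        + (1 / 2) * ((θ 0 - fun _ => (∑ j, Pl j) / (∑ j, (q j)⁻¹))
            ⬝ᵥ (θ 0 - fun _ => (∑ j, Pl j) / (∑ j, (q j)⁻¹))))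
        + (1 / (2 * ε)) * ∫ s in Set.Ioc (0:ℝ) t, ∑ i, (Ql s i) ^ 2) :=
  closed_loop_L2_robustness_general ep1 ep2 hep B Bii Xd Xd' Md Ad Td hT q G Efd Pl ηb Vb heq2 Ql
    hL2 η ω ω' V V' θ hη hω hωdyn hV hVdyn hθ ε hε0 hε
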